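/- Let w be a freely reduced word of rank i with rank-i piece decomposition w = π_1 ⋯ π_p. Then for k = 1, …, p−1, the words φ^{±1}(π_k) and φ^{±1}(π_{k+1}) end and begin, respectively, with letters that are not mutually inverse. Consequently, for every r ∈ ℤ the concatenation φ^r(π_1) ⋯ φ^r(π_p) is freely reduced and is the rank-i piece decomposition of φ^r(w). -/

import Mathlib

open FreeGroup SemidirectProduct

/-- Words on the letters `a₁^{±1}, …, a_m^{±1}` (`(i, true)` is `a_{i+1}`,
`(i, false)` is `a_{i+1}⁻¹`, with 0-based `Fin`-indexing of the generators). -/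
abbrev FWord (m : ℕ) := List (Fin m × Bool)

/-- A word is freely reduced. -/
def Reduced {m : ℕ} (w : FWord m) : Prop := FreeGroup.reduce w = w

/-- `φ` is the automorphism of `F = F(a₁, …, a_m)` with `φ(a₁) = a₁` and
`φ(aᵢ) = aᵢ aᵢ₋₁` for `2 ≤ i ≤ m`. -/
def IsHydraAut (m : ℕ) (φ : FreeGroup (Fin m) ≃* FreeGroup (Fin m)) : Prop :=
  ∀ i : Fin m, φ (FreeGroup.of i) =
    if i.val = 0 then FreeGroup.of i
    else FreeGroup.of i *
      FreeGroup.of (⟨i.val - 1, Nat.lt_of_le_of_lt (Nat.sub_le _ _) i.isLt⟩ : Fin m)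

/-- The free-by-cyclic group `H_m = F ⋊_φ ℤ`; here `s = inr (ofAdd 1)` and the defining
relation `s⁻¹ aᵢ s = φ(aᵢ)` holds.  The normal form `ũ s^p` is the element
`⟨ũ, Multiplicative.ofAdd p⟩`. -/
abbrev Hgrp (m : ℕ) (φ : FreeGroup (Fin m) ≃* FreeGroup (Fin m)) :=
  FreeGroup (Fin m) ⋊[zpowersHom (MulAut (FreeGroup (Fin m))) φ⁻¹] Multiplicative ℤ

/-- Letters of words over the generators of `H_m`: `some i` is `a_{i+1}`, `none` is `s`. -/
abbrev HWord (m : ℕ) := List (Option (Fin m) × Bool)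

def hLetter {m : ℕ} (φ : FreeGroup (Fin m) ≃* FreeGroup (Fin m)) (x : Option (Fin m) × Bool) :
    Hgrp m φ :=
  match x.1 with
  | some i => cond x.2 (SemidirectProduct.inl (FreeGroup.of i))
      (SemidirectProduct.inl (FreeGroup.of i))⁻¹
  | none => cond x.2 (SemidirectProduct.inr (Multiplicative.ofAdd (1:ℤ)))
      (SemidirectProduct.inr (Multiplicative.ofAdd (1:ℤ)))⁻¹

/-- The element of `H_m` represented by a word on `a₁^{±1}, …, a_m^{±1}, s^{±1}`. -/
def evalH {m : ℕ} (φ : FreeGroup (Fin m) ≃* FreeGroup (Fin m)) (w : HWord m) : Hgrp m φ :=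
  (w.map (hLetter φ)).prod

/-- Word length in `H_m` w.r.t. the generating set `{a₁, …, a_m, s}`. -/
noncomputable def lenH {m : ℕ} (φ : FreeGroup (Fin m) ≃* FreeGroup (Fin m)) (g : Hgrp m φ) : ℕ :=
  sInf {n | ∃ w : HWord m, evalH φ w = g ∧ w.length = n}

/-- Word length in `F` w.r.t. the generating set `{a₁, …, a_m}`. -/
noncomputable def lenF {m : ℕ} (g : FreeGroup (Fin m)) : ℕ :=
  sInf {n | ∃ w : FWord m, FreeGroup.mk w = g ∧ w.length = n}

/-- The rank of a word: the maximal `i` such that `aᵢ^{±1}` occurs in it (a letter with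
`Fin`-index `j` is `a_{j+1}`, so it contributes `j+1`); the empty word has rank `0`. -/
def wrank {m : ℕ} (w : FWord m) : ℕ := (w.map (fun x => x.1.val + 1)).foldr max 0

/-- The four types of rank-`i` pieces: `aᵢ u`, `u aᵢ⁻¹`, `aᵢ u aᵢ⁻¹`, `u`. -/
inductive PieceType | head | tail | both | plain
deriving DecidableEq

/-- `π` is a rank-`i` piece of the given type: `aᵢ u`, `u aᵢ⁻¹`, `aᵢ u aᵢ⁻¹` or `u`,
where `u` is a (possibly empty) word of rank at most `i - 1`.  Pieces of the first three
types have strict rank `i`. -/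
def IsPieceType {m : ℕ} (i : ℕ) (t : PieceType) (π : FWord m) : Prop :=
  match t with
  | .head => ∃ (x : Fin m × Bool) (u : FWord m),
      π = x :: u ∧ x.1.val + 1 = i ∧ x.2 = true ∧ wrank u < i
  | .tail => ∃ (x : Fin m × Bool) (u : FWord m),
      π = u ++ [x] ∧ x.1.val + 1 = i ∧ x.2 = false ∧ wrank u < i
  | .both => ∃ (j : Fin m) (u : FWord m),
      π = (j, true) :: (u ++ [(j, false)]) ∧ j.val + 1 = i ∧ wrank u < i
  | .plain => wrank π < i

def IsPiece {m : ℕ} (i : ℕ) (π : FWord m) : Prop := ∃ t, IsPieceType i t π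

/-- The rank-`i` piece decomposition of `w`: a decomposition into rank-`i` pieces
with the minimal possible number of pieces. -/
def IsPieceDecomp {m : ℕ} (i : ℕ) (w : FWord m) (L : List (FWord m)) : Prop :=
  L.flatten = w ∧ (∀ π ∈ L, IsPiece i π) ∧
    ∀ L' : List (FWord m), L'.flatten = w → (∀ π ∈ L', IsPiece i π) → L.length ≤ L'.length

/-- The number of pieces in the rank-`i` decomposition of `w`, for `i = wrank w`. -/
noncomputable def piecesCount {m : ℕ} (w : FWord m) : ℕ :=
  sInf {p | ∃ L : List (FWord m),
    L.flatten = w ∧ (∀ π ∈ L, IsPiece (wrank w) π) ∧ L.length = p}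

/-- The number of pieces of an element of the free group. -/
noncomputable def piecesCountF {m : ℕ} (g : FreeGroup (Fin m)) : ℕ :=
  piecesCount (FreeGroup.toWord g)

/-!
Write `F_c` for the subgroup generated by `a₁, …, a_c`. The automorphism `φ` is unitriangular,
`φ(a_j) ∈ a_j F_{j-1}`, and unitriangular automorphisms form a group that preserves every `F_c`;
so each `φ^r` sends a rank-`i` piece `a_i u`, `u a_i⁻¹`, `a_i u a_i⁻¹`, `u` (`u ∈ F_{i-1}`) to a
freely reduced piece of the same type. The type of a piece decides whether it begins with `a_i`
and whether it ends with `a_i⁻¹`. In a minimal decomposition, two adjacent pieces could be merged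
unless the first ends with `a_i⁻¹` or the second begins with `a_i`, and reducedness of `w` forbids
both at once. This dichotomy survives `φ^r` and excludes cancellation between the images.
Minimality of the image decomposition follows by applying the same argument to `φ^{-r}`.
-/

section

variable {m : ℕ}

theorem wrank_le_iff {w : FWord m} {c : ℕ} : wrank w ≤ c ↔ ∀ x ∈ w, x.1.val + 1 ≤ c := by
  induction w with
  | nil => simp [wrank]
  | cons x w ih => simp_all [wrank]

theorem le_wrank {w : FWord m} {x : Fin m × Bool} (hx : x ∈ w) : x.1.val + 1 ≤ wrank w :=
  wrank_le_iff.1 le_rfl x hx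

theorem wrank_le_of_sublist {v w : FWord m} (h : v.Sublist w) : wrank v ≤ wrank w :=
  wrank_le_iff.2 fun _ hx => le_wrank (h.subset hx)

theorem wrank_append (v w : FWord m) : wrank (v ++ w) = max (wrank v) (wrank w) := by
  refine le_antisymm (wrank_le_iff.2 fun x hx => ?_) (max_le ?_ ?_)
  · rcases List.mem_append.1 hx with hx | hx
    · exact le_max_of_le_left (le_wrank hx)
    · exact le_max_of_le_right (le_wrank hx)
  · exact wrank_le_of_sublist (List.sublist_append_left v w)
  · exact wrank_le_of_sublist (List.sublist_append_right v w)

theorem wrank_invRev (w : FWord m) : wrank (invRev w) = wrank w := by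
  refine le_antisymm (wrank_le_iff.2 fun x hx => ?_) (wrank_le_iff.2 fun x hx => ?_)
  · obtain ⟨y, hy, rfl⟩ : ∃ y ∈ w, (y.1, !y.2) = x := by simpa [invRev] using hx
    exact le_wrank (x := y) hy
  · exact le_wrank (x := (x.1, !x.2)) (by simpa [invRev] using hx)

/-- The subgroup `F_c = ⟨a₁, …, a_c⟩`. -/
def rankLeSubgroup (m c : ℕ) : Subgroup (FreeGroup (Fin m)) where
  carrier := {g | wrank g.toWord ≤ c}
  mul_mem' {g h} hg hh := by
    have := wrank_le_of_sublist (toWord_mul_sublist g h)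
    rw [wrank_append] at this
    exact this.trans (max_le hg hh)
  one_mem' := by simp [wrank]
  inv_mem' {g} hg := by simpa [toWord_inv, wrank_invRev] using hg

theorem mem_rankLeSubgroup {c : ℕ} {g : FreeGroup (Fin m)} :
    g ∈ rankLeSubgroup m c ↔ wrank g.toWord ≤ c := Iff.rfl

theorem mk_mem_rankLeSubgroup {c : ℕ} {u : FWord m} (hu : wrank u ≤ c) :
    mk u ∈ rankLeSubgroup m c := by
  rw [mem_rankLeSubgroup, toWord_mk]
  exact (wrank_le_of_sublist reduce.red.sublist).trans hu

theorem of_mem_rankLeSubgroup {c : ℕ} {a : Fin m} (ha : a.val < c) :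
    of a ∈ rankLeSubgroup m c := by
  simpa [mem_rankLeSubgroup, toWord_of, wrank] using ha

theorem rankLeSubgroup_mono {c d : ℕ} (h : c ≤ d) : rankLeSubgroup m c ≤ rankLeSubgroup m d :=
  fun _ hg => le_trans hg h

theorem map_mem_rankLeSubgroup {F : Type*} [FunLike F (FreeGroup (Fin m)) (FreeGroup (Fin m))]
    [MonoidHomClass F (FreeGroup (Fin m)) (FreeGroup (Fin m))] (f : F) {c : ℕ}
    (hf : ∀ a : Fin m, a.val < c → f (of a) ∈ rankLeSubgroup m c) {g : FreeGroup (Fin m)}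
    (hg : g ∈ rankLeSubgroup m c) : f g ∈ rankLeSubgroup m c := by
  suffices ∀ u : FWord m, wrank u ≤ c → f (mk u) ∈ rankLeSubgroup m c by
    simpa only [mk_toWord] using this g.toWord hg
  intro u hu
  induction u with
  | nil => exact (_root_.map_one f).symm ▸ Subgroup.one_mem _
  | cons x u ih =>
    rw [wrank_le_iff, List.forall_mem_cons, ← wrank_le_iff] at hu
    have hx := hf x.1 (by omega)
    obtain ⟨a, _ | _⟩ := x
    · change f ((of a)⁻¹ * mk u) ∈ _
      rw [_root_.map_mul, _root_.map_inv]
      exact Subgroup.mul_mem _ (Subgroup.inv_mem _ hx) (ih hu.2)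
    · change f (of a * mk u) ∈ _
      rw [_root_.map_mul]
      exact Subgroup.mul_mem _ hx (ih hu.2)

theorem apply_mem_rankLeSubgroup {f : FreeGroup (Fin m) ≃* FreeGroup (Fin m)}
    (hf : ∀ a : Fin m, (of a)⁻¹ * f (of a) ∈ rankLeSubgroup m a.val) {c : ℕ}
    {g : FreeGroup (Fin m)} (hg : g ∈ rankLeSubgroup m c) : f g ∈ rankLeSubgroup m c := by
  refine map_mem_rankLeSubgroup f (fun a ha => ?_) hg
  simpa using mul_mem (of_mem_rankLeSubgroup ha) (rankLeSubgroup_mono ha.le (hf a))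

theorem symm_apply_mem_rankLeSubgroup {f : FreeGroup (Fin m) ≃* FreeGroup (Fin m)}
    (hf : ∀ a : Fin m, (of a)⁻¹ * f (of a) ∈ rankLeSubgroup m a.val) {c : ℕ}
    {g : FreeGroup (Fin m)} (hg : g ∈ rankLeSubgroup m c) : f.symm g ∈ rankLeSubgroup m c := by
  induction c generalizing g with
  | zero =>
    exact map_mem_rankLeSubgroup f.symm (fun a ha => absurd ha a.val.not_lt_zero) hg
  | succ c ih =>
    refine map_mem_rankLeSubgroup f.symm (fun a ha => ?_) hg
    have hc : (of a)⁻¹ * f (of a) ∈ rankLeSubgroup m c :=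
      rankLeSubgroup_mono (Nat.lt_succ_iff.1 ha) (hf a)
    have key : f.symm (of a) = of a * (f.symm ((of a)⁻¹ * f (of a)))⁻¹ := by simp
    rw [key]
    exact mul_mem (of_mem_rankLeSubgroup ha) (rankLeSubgroup_mono c.le_succ (inv_mem (ih hc)))

/-- Automorphisms with `f(a_j) ∈ a_j F_{j-1}` for every `j`. -/
def unitriangularAut (m : ℕ) : Subgroup (MulAut (FreeGroup (Fin m))) where
  carrier := {f | ∀ a : Fin m, (of a)⁻¹ * f (of a) ∈ rankLeSubgroup m a.val}
  mul_mem' {f g} hf hg a := by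
    have key : (of a)⁻¹ * (f * g) (of a) = (of a)⁻¹ * f (of a) * f ((of a)⁻¹ * g (of a)) := by
      simp [mul_assoc]
    rw [key]
    exact mul_mem (hf a) (apply_mem_rankLeSubgroup hf (hg a))
  one_mem' a := by simp
  inv_mem' {f} hf a := by
    have key : (of a)⁻¹ * f⁻¹ (of a) = (f.symm ((of a)⁻¹ * f (of a)))⁻¹ := by
      simp [MulAut.inv_def]
    rw [key]
    exact inv_mem (symm_apply_mem_rankLeSubgroup hf (hf a))

theorem IsHydraAut.mem_unitriangularAut {φ : FreeGroup (Fin m) ≃* FreeGroup (Fin m)}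
    (hφ : IsHydraAut m φ) : φ ∈ unitriangularAut m := by
  intro a
  rw [hφ a]
  split_ifs with ha
  · simp
  · simpa using of_mem_rankLeSubgroup (show a.val - 1 < a.val by omega)

theorem fst_ne_of_mem_toWord {a : Fin m} {h : FreeGroup (Fin m)}
    (hh : h ∈ rankLeSubgroup m a.val) {y : Fin m × Bool} (hy : y ∈ h.toWord) : y.1 ≠ a := by
  rintro rfl
  have := le_wrank hy
  rw [mem_rankLeSubgroup] at hh
  omega

theorem isReduced_cons {α : Type*} {x : α × Bool} {l : List (α × Bool)} (hl : IsReduced l)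
    (hx : ∀ y ∈ l.head?, y.1 ≠ x.1) : IsReduced (x :: l) :=
  List.isChain_cons.2 ⟨fun y hy hxy => absurd hxy.symm (hx y hy), hl⟩

theorem toWord_of_mul {a : Fin m} {h : FreeGroup (Fin m)} (hh : h ∈ rankLeSubgroup m a.val) :
    (of a * h).toWord = (a, true) :: h.toWord := by
  have hred : IsReduced ((a, true) :: h.toWord) :=
    isReduced_cons isReduced_toWord fun _ hy => fst_ne_of_mem_toWord hh (List.mem_of_mem_head? hy)
  calc (of a * h).toWord = (mk ((a, true) :: h.toWord)).toWord := by
        conv_lhs => rw [← mk_toWord (x := h)]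
        rfl
    _ = _ := by rw [toWord_mk, hred.reduce_eq]

theorem toWord_mul_inv_of {a : Fin m} {h : FreeGroup (Fin m)}
    (hh : h ∈ rankLeSubgroup m a.val) :
    (h * (of a)⁻¹).toWord = h.toWord ++ [(a, false)] := by
  rw [show h * (of a)⁻¹ = (of a * h⁻¹)⁻¹ by group, toWord_inv, toWord_of_mul (inv_mem hh),
    invRev_cons, toWord_inv, invRev_invRev]
  rfl

theorem toWord_of_mul_mul_inv_of {a : Fin m} {h : FreeGroup (Fin m)}
    (hh : h ∈ rankLeSubgroup m a.val) (hne : h ≠ 1) :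
    (of a * h * (of a)⁻¹).toWord = (a, true) :: (h.toWord ++ [(a, false)]) := by
  have hnil : h.toWord ≠ [] := by rwa [Ne, toWord_eq_nil_iff]
  have hred : IsReduced ((a, true) :: (h.toWord ++ [(a, false)])) := by
    refine isReduced_cons (toWord_mul_inv_of hh ▸ isReduced_toWord) fun y hy => ?_
    rw [List.head?_append_of_ne_nil _ hnil] at hy
    exact fst_ne_of_mem_toWord hh (List.mem_of_mem_head? hy)
  calc (of a * h * (of a)⁻¹).toWord = (mk ((a, true) :: (h * (of a)⁻¹).toWord)).toWord := by
        conv_lhs => rw [mul_assoc, ← mk_toWord (x := h * _)]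
        rfl
    _ = _ := by rw [toWord_mul_inv_of hh, toWord_mk, hred.reduce_eq]

theorem mk_flatten_map_toWord {α β F : Type*} [DecidableEq β]
    [FunLike F (FreeGroup α) (FreeGroup β)] [MonoidHomClass F (FreeGroup α) (FreeGroup β)] (f : F)
    (L : List (List (α × Bool))) :
    mk (L.map fun π => (f (mk π)).toWord).flatten = f (mk L.flatten) := by
  induction L with
  | nil => exact (_root_.map_one f).symm
  | cons π L ih =>
    rw [List.map_cons, List.flatten_cons, List.flatten_cons, ← mul_mk, ← mul_mk, ih, mk_toWord,
      _root_.map_mul]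

section Unitriangular

variable {f : MulAut (FreeGroup (Fin m))}

theorem exists_apply_of_mul_eq (hf : f ∈ unitriangularAut m) {a : Fin m}
    {h : FreeGroup (Fin m)} (hh : h ∈ rankLeSubgroup m a.val) :
    ∃ h' ∈ rankLeSubgroup m a.val, f (of a * h) = of a * h' := by
  refine ⟨(of a)⁻¹ * f (of a * h), ?_, (mul_inv_cancel_left _ _).symm⟩
  rw [_root_.map_mul, ← mul_assoc]
  exact mul_mem (hf a) (apply_mem_rankLeSubgroup hf hh)

theorem toWord_apply_of_mul (hf : f ∈ unitriangularAut m) {a : Fin m} {h : FreeGroup (Fin m)}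
    (hh : h ∈ rankLeSubgroup m a.val) :
    ∃ h' ∈ rankLeSubgroup m a.val, (f (of a * h)).toWord = (a, true) :: h'.toWord := by
  obtain ⟨h', hh', e⟩ := exists_apply_of_mul_eq hf hh
  exact ⟨h', hh', by rw [e, toWord_of_mul hh']⟩

theorem toWord_apply_mul_inv_of (hf : f ∈ unitriangularAut m) {a : Fin m}
    {h : FreeGroup (Fin m)} (hh : h ∈ rankLeSubgroup m a.val) :
    ∃ h' ∈ rankLeSubgroup m a.val, (f (h * (of a)⁻¹)).toWord = h'.toWord ++ [(a, false)] := by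
  obtain ⟨h', hh', e⟩ := exists_apply_of_mul_eq hf (inv_mem hh)
  refine ⟨h'⁻¹, inv_mem hh', ?_⟩
  rw [show h * (of a)⁻¹ = (of a * h⁻¹)⁻¹ by group, _root_.map_inv, e, mul_inv_rev,
    toWord_mul_inv_of (inv_mem hh')]

theorem toWord_apply_of_mul_mul_inv_of (hf : f ∈ unitriangularAut m) {a : Fin m}
    {h : FreeGroup (Fin m)} (hh : h ∈ rankLeSubgroup m a.val) (hne : h ≠ 1) :
    ∃ h' ∈ rankLeSubgroup m a.val,
      (f (of a * h * (of a)⁻¹)).toWord = (a, true) :: (h'.toWord ++ [(a, false)]) := by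
  obtain ⟨h', hh', e⟩ := exists_apply_of_mul_eq hf hh
  obtain ⟨c, hc, ec⟩ := exists_apply_of_mul_eq hf (one_mem _)
  rw [mul_one] at ec
  have hne' : h' * c⁻¹ ≠ 1 := by
    rw [Ne, mul_inv_eq_one, ← mul_right_inj (of a), ← e, ← ec, f.injective.eq_iff, mul_eq_left]
    exact hne
  refine ⟨h' * c⁻¹, mul_mem hh' (inv_mem hc), ?_⟩
  rw [_root_.map_mul, _root_.map_inv, e, ec,
    ← toWord_of_mul_mul_inv_of (mul_mem hh' (inv_mem hc)) hne']
  group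

theorem mk_ne_one_of_isReduced_cons_append {a : Fin m} {u : FWord m}
    (h : IsReduced ((a, true) :: (u ++ [(a, false)]))) : mk u ≠ 1 := by
  have hu : IsReduced u := h.infix ⟨[(a, true)], [(a, false)], rfl⟩
  rw [Ne, ← toWord_eq_nil_iff, toWord_mk, hu.reduce_eq]
  rintro rfl
  simp at h

theorem IsPieceType.toWord_apply (hf : f ∈ unitriangularAut m) {i : ℕ} {t : PieceType}
    {π : FWord m} (ht : IsPieceType i t π) (hπ : IsReduced π) :
    IsPieceType i t (f (mk π)).toWord := by
  cases t with
  | head =>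
    obtain ⟨⟨a, _⟩, u, rfl, hai : a.val + 1 = i, rfl, hu⟩ := ht
    obtain ⟨h, hh, e⟩ :=
      toWord_apply_of_mul hf (a := a) (mk_mem_rankLeSubgroup (u := u) (by omega))
    exact ⟨(a, true), h.toWord, e, hai, rfl, by rw [mem_rankLeSubgroup] at hh; omega⟩
  | tail =>
    obtain ⟨⟨a, _⟩, u, rfl, hai : a.val + 1 = i, rfl, hu⟩ := ht
    obtain ⟨h, hh, e⟩ :=
      toWord_apply_mul_inv_of hf (a := a) (mk_mem_rankLeSubgroup (u := u) (by omega))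
    exact ⟨(a, false), h.toWord, e, hai, rfl, by rw [mem_rankLeSubgroup] at hh; omega⟩
  | both =>
    obtain ⟨a, u, rfl, hai, hu⟩ := ht
    obtain ⟨h, hh, e⟩ := toWord_apply_of_mul_mul_inv_of hf (a := a)
      (mk_mem_rankLeSubgroup (u := u) (by omega)) (mk_ne_one_of_isReduced_cons_append hπ)
    exact ⟨a, h.toWord, e, hai, by rw [mem_rankLeSubgroup] at hh; omega⟩
  | plain =>
    exact lt_of_le_of_lt (apply_mem_rankLeSubgroup hf (mk_mem_rankLeSubgroup le_rfl)) ht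

end Unitriangular

def StartsWithTop {m : ℕ} (i : ℕ) (π : FWord m) : Prop :=
  ∃ a : Fin m, a.val + 1 = i ∧ π.head? = some (a, true)

def EndsWithTopInv {m : ℕ} (i : ℕ) (π : FWord m) : Prop :=
  ∃ a : Fin m, a.val + 1 = i ∧ π.getLast? = some (a, false)

theorem not_startsWithTop {i : ℕ} {π : FWord m} (h : ∀ y ∈ π, y.1.val + 1 = i → y.2 = false) :
    ¬StartsWithTop i π := fun ⟨_, hai, hπ⟩ =>
  Bool.true_eq_false.mp (h _ (List.mem_of_mem_head? hπ) hai)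

theorem not_endsWithTopInv {i : ℕ} {π : FWord m} (h : ∀ y ∈ π, y.1.val + 1 = i → y.2 = true) :
    ¬EndsWithTopInv i π := fun ⟨_, hai, hπ⟩ =>
  Bool.false_eq_true.mp (h _ (List.mem_of_mem_getLast? hπ) hai)

theorem IsPieceType.startsWithTop_iff {i : ℕ} {t : PieceType} {π : FWord m}
    (ht : IsPieceType i t π) : StartsWithTop i π ↔ t = .head ∨ t = .both := by
  cases t with
  | head =>
    obtain ⟨⟨a, _⟩, u, rfl, hai, rfl, -⟩ := ht
    exact iff_of_true ⟨a, hai, rfl⟩ (.inl rfl)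
  | both =>
    obtain ⟨a, u, rfl, hai, -⟩ := ht
    exact iff_of_true ⟨a, hai, rfl⟩ (.inr rfl)
  | tail =>
    obtain ⟨x, u, rfl, hxi, hx, hu⟩ := ht
    refine iff_of_false (not_startsWithTop fun y hy hyi => ?_) (by simp)
    rcases List.mem_append.1 hy with hy | hy
    · exact absurd (le_wrank hy) (by omega)
    · rwa [List.mem_singleton.1 hy]
  | plain =>
    have ht : wrank π < i := ht
    exact iff_of_false (not_startsWithTop fun _ hy _ => absurd (le_wrank hy) (by omega))
      (by simp)

theorem IsPieceType.endsWithTopInv_iff {i : ℕ} {t : PieceType} {π : FWord m}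
    (ht : IsPieceType i t π) : EndsWithTopInv i π ↔ t = .tail ∨ t = .both := by
  cases t with
  | tail =>
    obtain ⟨⟨a, _⟩, u, rfl, hai, rfl, -⟩ := ht
    exact iff_of_true ⟨a, hai, List.getLast?_concat⟩ (.inl rfl)
  | both =>
    obtain ⟨a, u, rfl, hai, -⟩ := ht
    exact iff_of_true ⟨a, hai, by rw [← List.cons_append, List.getLast?_concat]⟩ (.inr rfl)
  | head =>
    obtain ⟨x, u, rfl, hxi, hx, hu⟩ := ht
    refine iff_of_false (not_endsWithTopInv fun y hy hyi => ?_) (by simp)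
    rcases List.mem_cons.1 hy with rfl | hy
    · exact hx
    · exact absurd (le_wrank hy) (by omega)
  | plain =>
    have ht : wrank π < i := ht
    exact iff_of_false (not_endsWithTopInv fun _ hy _ => absurd (le_wrank hy) (by omega))
      (by simp)

theorem IsPiece.append {i : ℕ} {a b : FWord m} (ha : IsPiece i a) (hb : IsPiece i b)
    (ha' : ¬EndsWithTopInv i a) (hb' : ¬StartsWithTop i b) : IsPiece i (a ++ b) := by
  obtain ⟨ta, hta⟩ := ha
  obtain ⟨tb, htb⟩ := hb
  rw [hta.endsWithTopInv_iff] at ha'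
  rw [htb.startsWithTop_iff] at hb'
  cases ta <;> cases tb <;> simp only [reduceCtorEq, or_self, or_false, false_or,
    not_true_eq_false] at ha' hb'
  case head.tail =>
    obtain ⟨⟨x, _⟩, u, rfl, hxi : x.val + 1 = i, rfl, hu⟩ := hta
    obtain ⟨⟨y, _⟩, v, rfl, hyi : y.val + 1 = i, rfl, hv⟩ := htb
    obtain rfl : x = y := Fin.ext (by omega)
    exact ⟨.both, x, u ++ v, by simp, hxi, by rw [wrank_append]; exact max_lt hu hv⟩
  case head.plain =>
    obtain ⟨x, u, rfl, hxi, hx, hu⟩ := hta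
    have htb : wrank b < i := htb
    exact ⟨.head, x, u ++ b, rfl, hxi, hx, by rw [wrank_append]; exact max_lt hu htb⟩
  case plain.tail =>
    obtain ⟨y, v, rfl, hyi, hy, hv⟩ := htb
    have hta : wrank a < i := hta
    exact ⟨.tail, y, a ++ v, by simp, hyi, hy, by rw [wrank_append]; exact max_lt hta hv⟩
  case plain.plain =>
    have hta : wrank a < i := hta
    have htb : wrank b < i := htb
    exact ⟨.plain, show wrank (a ++ b) < i by rw [wrank_append]; exact max_lt hta htb⟩

theorem not_endsWithTopInv_and_startsWithTop {i : ℕ} {a b : FWord m} (h : IsReduced (a ++ b)) :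
    ¬(EndsWithTopInv i a ∧ StartsWithTop i b) := by
  rintro ⟨⟨x, hxi, hx⟩, ⟨y, hyi, hy⟩⟩
  obtain rfl : x = y := Fin.ext (by omega)
  simpa using (List.isChain_append.1 h).2.2 _ hx _ hy rfl

theorem rel_getLast_head_of_xor {i : ℕ} {a b : FWord m}
    (h : Xor (EndsWithTopInv i a) (StartsWithTop i b)) :
    ∀ x ∈ a.getLast?, ∀ y ∈ b.head?, x.1 = y.1 → x.2 = y.2 := by
  intro x hx y hy hxy
  rw [Option.mem_def] at hx hy
  rcases h with ⟨⟨c, hci, hc⟩, hb⟩ | ⟨⟨c, hci, hc⟩, ha⟩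
  · obtain rfl : x = (c, false) := Option.some_injective _ (hx.symm.trans hc)
    cases hy₂ : y.2
    · rfl
    · exact absurd ⟨c, hci, hy.trans (congrArg some (Prod.ext hxy.symm hy₂))⟩ hb
  · obtain rfl : y = (c, true) := Option.some_injective _ (hy.symm.trans hc)
    cases hx₂ : x.2
    · exact absurd ⟨c, hci, hx.trans (congrArg some (Prod.ext hxy hx₂))⟩ ha
    · rfl

section PieceDecomp

variable {i : ℕ} {w : FWord m} {L : List (FWord m)}

theorem IsPieceDecomp.nil_not_mem (hL : IsPieceDecomp i w L) : [] ∉ L := by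
  intro hnil
  obtain ⟨l₁, l₂, rfl⟩ := List.append_of_mem hnil
  have := hL.2.2 (l₁ ++ l₂) (by rw [← hL.1]; simp) fun π hπ =>
    hL.2.1 π (List.mem_append.2 ((List.mem_append.1 hπ).imp_right (List.mem_cons_of_mem _)))
  simp at this

theorem IsPieceDecomp.isReduced_of_mem (hw : IsReduced w) (hL : IsPieceDecomp i w L) :
    ∀ π ∈ L, IsReduced π :=
  ((List.isChain_flatten hL.nil_not_mem).1 (hL.1 ▸ hw)).1

theorem IsPieceDecomp.isChain_xor (hw : IsReduced w) (hL : IsPieceDecomp i w L) :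
    L.IsChain fun a b => Xor (EndsWithTopInv i a) (StartsWithTop i b) := by
  rw [List.isChain_iff_forall_rel_of_append_cons_cons]
  rintro a b l₁ l₂ rfl
  have hab : IsReduced (a ++ b) := hw.infix ⟨l₁.flatten, l₂.flatten, by rw [← hL.1]; simp⟩
  rw [xor_iff_not_iff, iff_iff_and_or_not_and_not, not_or]
  refine ⟨not_endsWithTopInv_and_startsWithTop hab, fun ⟨ha, hb⟩ => ?_⟩
  have hmerge := (hL.2.1 a (by simp)).append (hL.2.1 b (by simp)) ha hb
  have := hL.2.2 (l₁ ++ (a ++ b) :: l₂) (by rw [← hL.1]; simp)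
    fun π hπ => by
      simp only [List.mem_append, List.mem_cons] at hπ
      rcases hπ with hπ | rfl | hπ
      · exact hL.2.1 π (by simp [hπ])
      · exact hmerge
      · exact hL.2.1 π (by simp [hπ])
  simp at this

theorem exists_isPieceDecomp_length_le {L' : List (FWord m)} (h₁ : L'.flatten = w)
    (h₂ : ∀ π ∈ L', IsPiece i π) : ∃ M, IsPieceDecomp i w M ∧ M.length ≤ L'.length := by
  classical
  have hex : ∃ n, ∃ M : List (FWord m), M.flatten = w ∧ (∀ π ∈ M, IsPiece i π) ∧ M.length = n :=
    ⟨_, L', h₁, h₂, rfl⟩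
  obtain ⟨M, hM₁, hM₂, hM₃⟩ := Nat.find_spec hex
  exact ⟨M, ⟨hM₁, hM₂, fun N hN₁ hN₂ => hM₃ ▸ Nat.find_min' hex ⟨N, hN₁, hN₂, rfl⟩⟩,
    hM₃ ▸ Nat.find_min' hex ⟨L', h₁, h₂, rfl⟩⟩

variable {f : MulAut (FreeGroup (Fin m))}

theorem IsPiece.startsWithTop_toWord_apply_iff (hf : f ∈ unitriangularAut m) {π : FWord m}
    (hπ : IsPiece i π) (hred : IsReduced π) :
    StartsWithTop i (f (mk π)).toWord ↔ StartsWithTop i π := by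
  obtain ⟨t, ht⟩ := hπ
  rw [(ht.toWord_apply hf hred).startsWithTop_iff, ht.startsWithTop_iff]

theorem IsPiece.endsWithTopInv_toWord_apply_iff (hf : f ∈ unitriangularAut m) {π : FWord m}
    (hπ : IsPiece i π) (hred : IsReduced π) :
    EndsWithTopInv i (f (mk π)).toWord ↔ EndsWithTopInv i π := by
  obtain ⟨t, ht⟩ := hπ
  rw [(ht.toWord_apply hf hred).endsWithTopInv_iff, ht.endsWithTopInv_iff]

theorem IsPieceDecomp.isChain_xor_map (hf : f ∈ unitriangularAut m) (hw : IsReduced w)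
    (hL : IsPieceDecomp i w L) :
    (L.map fun π => (f (mk π)).toWord).IsChain
      fun a b => Xor (EndsWithTopInv i a) (StartsWithTop i b) := by
  refine (List.isChain_map _).2 ((hL.isChain_xor hw).imp_of_mem_imp fun a b ha hb h => ?_)
  rwa [(hL.2.1 a ha).endsWithTopInv_toWord_apply_iff hf (hL.isReduced_of_mem hw a ha),
    (hL.2.1 b hb).startsWithTop_toWord_apply_iff hf (hL.isReduced_of_mem hw b hb)]

theorem IsPieceDecomp.isReduced_flatten_map (hf : f ∈ unitriangularAut m) (hw : IsReduced w)
    (hL : IsPieceDecomp i w L) : IsReduced (L.map fun π => (f (mk π)).toWord).flatten := by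
  have hnil : [] ∉ L.map fun π => (f (mk π)).toWord := by
    simp only [List.mem_map, toWord_eq_nil_iff, MulEquiv.map_eq_one_iff, not_exists, not_and]
    intro π hπ h1
    have := (hL.isReduced_of_mem hw π hπ).reduce_eq
    rw [← toWord_mk, h1, toWord_one] at this
    exact hL.nil_not_mem (this ▸ hπ)
  refine (List.isChain_flatten hnil).2 ⟨?_,
    (hL.isChain_xor_map hf hw).imp fun _ _ => rel_getLast_head_of_xor⟩
  simp only [List.mem_map]
  rintro _ ⟨π, -, rfl⟩
  exact isReduced_toWord

theorem IsPieceDecomp.flatten_map (hf : f ∈ unitriangularAut m) (hw : IsReduced w)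
    (hL : IsPieceDecomp i w L) :
    (L.map fun π => (f (mk π)).toWord).flatten = (f (mk w)).toWord := by
  rw [← hL.1, ← mk_flatten_map_toWord, toWord_mk, (hL.isReduced_flatten_map hf hw).reduce_eq]

theorem IsPieceDecomp.isPiece_map (hf : f ∈ unitriangularAut m) (hw : IsReduced w)
    (hL : IsPieceDecomp i w L) : ∀ π' ∈ L.map fun π => (f (mk π)).toWord, IsPiece i π' := by
  simp only [List.mem_map]
  rintro _ ⟨π, hπ, rfl⟩
  obtain ⟨t, ht⟩ := hL.2.1 π hπ
  exact ⟨t, ht.toWord_apply hf (hL.isReduced_of_mem hw π hπ)⟩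

theorem IsPieceDecomp.map (hf : f ∈ unitriangularAut m) (hw : IsReduced w)
    (hL : IsPieceDecomp i w L) :
    IsPieceDecomp i (f (mk w)).toWord (L.map fun π => (f (mk π)).toWord) := by
  refine ⟨hL.flatten_map hf hw, hL.isPiece_map hf hw, fun M hM₁ hM₂ => ?_⟩
  obtain ⟨M₀, hM₀, hle⟩ := exists_isPieceDecomp_length_le hM₁ hM₂
  have := hL.2.2 _ ?_ (hM₀.isPiece_map (inv_mem hf) isReduced_toWord)
  · simp only [List.length_map] at this ⊢
    omega
  · rw [hM₀.flatten_map (inv_mem hf) isReduced_toWord, mk_toWord, MulAut.inv_apply_self, toWord_mk,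
      hw.reduce_eq]

end PieceDecomp

end

theorem stmt_5_general (m : ℕ)
    (φ : FreeGroup (Fin m) ≃* FreeGroup (Fin m)) (hφ : IsHydraAut m φ)
    (i : ℕ) (w : FWord m) (hred : Reduced w)
    (L : List (FWord m)) (hL : IsPieceDecomp i w L) :
    (∀ k : ℕ, k + 1 < L.length → ∀ ε : ℤ, ε = 1 ∨ ε = -1 →
      ∀ x y : Fin m × Bool,
        (FreeGroup.toWord ((φ ^ ε) (FreeGroup.mk (L.getD k [])))).getLast? = some x →
        (FreeGroup.toWord ((φ ^ ε) (FreeGroup.mk (L.getD (k+1) [])))).head? = some y →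
        y ≠ (x.1, !x.2)) ∧
    (∀ r : ℤ,
      Reduced ((L.map (fun π => FreeGroup.toWord ((φ ^ r) (FreeGroup.mk π)))).flatten) ∧
      (L.map (fun π => FreeGroup.toWord ((φ ^ r) (FreeGroup.mk π)))).flatten =
        FreeGroup.toWord ((φ ^ r) (FreeGroup.mk w)) ∧
      IsPieceDecomp i (FreeGroup.toWord ((φ ^ r) (FreeGroup.mk w)))
        (L.map (fun π => FreeGroup.toWord ((φ ^ r) (FreeGroup.mk π))))) := by
  have hw : IsReduced w := isReduced_iff_reduce_eq.2 hred
  have hpow (r : ℤ) : φ ^ r ∈ unitriangularAut m := zpow_mem hφ.mem_unitriangularAut r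
  refine ⟨fun k hk ε _ x y hx hy => ?_, fun r => ?_⟩
  · have hxor := List.isChain_iff_getElem.1 (hL.isChain_xor_map (hpow ε) hw) k (by simpa using hk)
    simp only [List.getElem_map] at hxor
    rw [List.getD_eq_getElem _ _ (by omega)] at hx
    rw [List.getD_eq_getElem _ _ hk] at hy
    rintro rfl
    simpa using rel_getLast_head_of_xor hxor x hx _ hy rfl
  · have hflat := hL.flatten_map (hpow r) hw
    exact ⟨(hflat ▸ isReduced_toWord).reduce_eq, hflat, hL.map (hpow r) hw⟩

/-- Lemma 3.2: in a rank-`i` piece decomposition there is no cancellation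
between consecutive pieces after applying `φ^{±1}`, and applying `φ^r` piecewise gives the
rank-`i` decomposition of `φ^r(w)`. -/
theorem stmt_5 (m : ℕ) (hm : 2 ≤ m)
    (φ : FreeGroup (Fin m) ≃* FreeGroup (Fin m)) (hφ : IsHydraAut m φ)
    (i : ℕ) (w : FWord m) (hred : Reduced w) (hrank : wrank w = i)
    (L : List (FWord m)) (hL : IsPieceDecomp i w L) :
    (∀ k : ℕ, k + 1 < L.length → ∀ ε : ℤ, ε = 1 ∨ ε = -1 →
      ∀ x y : Fin m × Bool,
        (FreeGroup.toWord ((φ ^ ε) (FreeGroup.mk (L.getD k [])))).getLast? = some x →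
        (FreeGroup.toWord ((φ ^ ε) (FreeGroup.mk (L.getD (k+1) [])))).head? = some y →
        y ≠ (x.1, !x.2)) ∧
    (∀ r : ℤ,
      Reduced ((L.map (fun π => FreeGroup.toWord ((φ ^ r) (FreeGroup.mk π)))).flatten) ∧
      (L.map (fun π => FreeGroup.toWord ((φ ^ r) (FreeGroup.mk π)))).flatten =
        FreeGroup.toWord ((φ ^ r) (FreeGroup.mk w)) ∧
      IsPieceDecomp i (FreeGroup.toWord ((φ ^ r) (FreeGroup.mk w)))
        (L.map (fun π => FreeGroup.toWord ((φ ^ r) (FreeGroup.mk π))))) :=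
  stmt_5_general m φ hφ i w hred L hL
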